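/- arXiv:2407.06676 — 4 statements merged into one kernel-verified Lean document; each statement's English description precedes it below -/
import Mathlib

section
/- Let $(Z_t)_{t \geq 0}$ be a homogeneous Markov chain with values in $[1,\infty)$ on a filtered probability space, and $M_0 > 0$ such that the stopped process $Z_{t \wedge \tau}$, with $\tau = \inf\{t : Z_t < M_0\}$, is a nonnegative supermartingale from any starting point. Suppose moreover $\mathbb{P}_z(\tau = \infty,\ \lim_t Z_t = \infty) = 0$ for every starting point $z$. Then for every starting point, $\mathbb{P}(\lim_{t\to\infty} Z_t = \infty) = 0$. -/
open Filter MeasureTheory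

/-! A trajectory diverging to `∞` eventually stays above `M₀`, so after some deterministic time
`t₀` the shifted trajectory lies in the event `{τ = ∞, Z_t → ∞}`. That event is null from every
starting point, so by the Markov property at `t₀` its shifted copy is null as well, and the
divergence event is a countable union of null sets. -/

theorem iInf_natCast_eq_top_iff (p : ℕ → Prop) :
    (⨅ (t : ℕ) (_ : p t), (t : ℕ∞)) = ⊤ ↔ ∀ t, ¬ p t := by
  simp [iInf_eq_top]

theorem setOf_tendsto_atTop_subset_iUnion_shift {α : Type*} [Preorder α] (M : α) :
    {ω : ℕ → α | Tendsto ω atTop atTop} ⊆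
      ⋃ t₀ : ℕ, {ω | (fun n => ω (n + t₀)) ∈ {ω' | (∀ n, M ≤ ω' n) ∧ Tendsto ω' atTop atTop}} := by
  intro ω hω
  obtain ⟨t₀, ht₀⟩ := (tendsto_atTop.1 hω M).exists_forall_of_atTop
  exact Set.mem_iUnion.2
    ⟨t₀, fun n => ht₀ (n + t₀) (Nat.le_add_left _ _), hω.comp (tendsto_add_atTop_nat t₀)⟩

theorem measure_iUnion_shift_preimage_eq_zero {α : Type*} [MeasurableSpace α]
    {P : α → Measure (ℕ → α)}
    (hMarkov : ∀ z (t₀ : ℕ) (S : Set (ℕ → α)), MeasurableSet S →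
      P z {ω | (fun n => ω (n + t₀)) ∈ S} = ∫⁻ ω, P (ω t₀) S ∂P z)
    {S : Set (ℕ → α)} (hS : MeasurableSet S) (hS_null : ∀ z, P z S = 0) (z : α) :
    P z (⋃ t₀ : ℕ, {ω | (fun n => ω (n + t₀)) ∈ S}) = 0 :=
  measure_iUnion_null fun t₀ => by simp [hMarkov z t₀ S hS, hS_null]

theorem stmt_6_general (P : ℝ → Measure (ℕ → ℝ))
    (M₀ : ℝ)
    (τ : (ℕ → ℝ) → ℕ∞)
    (hτ : ∀ ω, τ ω = ⨅ (t : ℕ) (_ : ω t < M₀), (t : ℕ∞))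
    (hnoesc : ∀ z,
      P z {ω | τ ω = ⊤ ∧ Tendsto (fun t => ω t) atTop atTop} = 0)
    -- homogeneous (weak) Markov property at every deterministic time
    (hMarkov : ∀ z (t₀ : ℕ) (S : Set (ℕ → ℝ)), MeasurableSet S →
      P z {ω | (fun n => ω (n + t₀)) ∈ S} = ∫⁻ ω, P (ω t₀) S ∂P z) :
    ∀ z, P z {ω | Tendsto (fun t => ω t) atTop atTop} = 0 := by
  intro z
  set S := {ω : ℕ → ℝ | (∀ n, M₀ ≤ ω n) ∧ Tendsto ω atTop atTop}
  have hS : MeasurableSet S := by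
    simp only [S, Set.ofPred_and, Set.ofPred_forall]
    exact (MeasurableSet.iInter fun n =>
      measurableSet_le measurable_const (measurable_pi_apply n)).inter
        (measurableSet_tendsto atTop measurable_pi_apply)
  have hS_eq : S = {ω | τ ω = ⊤ ∧ Tendsto (fun t => ω t) atTop atTop} := by
    ext ω
    simp only [S, Set.mem_ofPred_eq, hτ, iInf_natCast_eq_top_iff, not_lt]
  exact measure_mono_null (setOf_tendsto_atTop_subset_iUnion_shift M₀)
    (measure_iUnion_shift_preimage_eq_zero hMarkov hS (hS_eq ▸ hnoesc) z)

/-- a homogeneous Markov chain with values in `[1,∞)`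
(canonically realized on trajectory space `ℕ → ℝ`, `Z t ω = ω t`) whose
process stopped below the threshold `M₀` is a nonnegative supermartingale
from every starting point, and which from every starting point cannot
diverge to `∞` while staying above `M₀` forever, satisfies
`ℙ_z(lim Z_t = ∞) = 0` for every starting point `z`. -/
theorem stmt_6 (P : ℝ → Measure (ℕ → ℝ)) (hP : ∀ z, IsProbabilityMeasure (P z))
    (hval : ∀ z, ∀ᵐ ω ∂P z, ∀ t, 1 ≤ ω t)
    (M₀ : ℝ) (hM₀ : 0 < M₀)
    (ℱ : Filtration ℕ (inferInstance : MeasurableSpace (ℕ → ℝ)))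
    (hℱ : ∀ t, ℱ t =
      MeasurableSpace.comap (fun (ω : ℕ → ℝ) (k : Fin (t + 1)) => ω k)
        inferInstance)
    (τ : (ℕ → ℝ) → ℕ∞)
    (hτ : ∀ ω, τ ω = ⨅ (t : ℕ) (_ : ω t < M₀), (t : ℕ∞))
    (Zhat : ℕ → (ℕ → ℝ) → ℝ)
    (hZhat : ∀ t ω, Zhat t ω = ω ((min (t : ℕ∞) (τ ω)).toNat))
    (hsup : ∀ z, Supermartingale Zhat ℱ (P z))
    (hnoesc : ∀ z,
      P z {ω | τ ω = ⊤ ∧ Tendsto (fun t => ω t) atTop atTop} = 0)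
    -- homogeneous (weak) Markov property at every deterministic time
    (hMarkov : ∀ z (t₀ : ℕ) (S : Set (ℕ → ℝ)), MeasurableSet S →
      P z {ω | (fun n => ω (n + t₀)) ∈ S} = ∫⁻ ω, P (ω t₀) S ∂P z) :
    ∀ z, P z {ω | Tendsto (fun t => ω t) atTop atTop} = 0 :=
  stmt_6_general P M₀ τ hτ hnoesc hMarkov
end

section
/- In a two-player $2\times 2$ game where player 1's payoff is identically $1$, player 2's payoff is $1$ if the action profile is $(T,L)$ or $(B,R)$ and $0$ otherwise, and both players use exponential weights with uniform initial weights and learning rates $\eta_1, \eta_2 > 0$: player 1's mixed action satisfies $p_1^t(T) = p_1^t(B) = 1/2$ for all $t$, and $p_2^t(L) = \frac{1}{1 + e^{\eta_2 Z_t}}$ where $Z_t = \sum_{k=0}^{t-1}(\mathbf{1}_{a_1^k = B} - \mathbf{1}_{a_1^k = T})$ is a simple symmetric random walk on $\mathbb{Z}$; consequently $(p_2^t(L))_t$ almost surely does not converge. -/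
open Filter Finset MeasureTheory ProbabilityTheory

/-!
Player 1's payoff is constant, so their two cumulative payoffs agree and `p₁ᵗ` stays uniform.
Player 2's cumulative payoffs differ by the walk `Z_t`, so `p₂ᵗ(L) = σ(-η₂ Z_t)` with `σ` the
logistic sigmoid. For the natural filtration of player 1's actions, `Z_{t+1}` is a martingale with
increments of size exactly `1`, so it cannot converge; since a martingale with bounded increments
a.s. either converges or is unbounded both above and below, `Z_t` is a.s. unbounded in both
directions. Hence `p₂ᵗ(L)` is frequently below `σ(-η₂)` and frequently above `σ(η₂)`.
-/

lemma mul_exp_div_mul_exp_add_mul_exp {c : ℝ} (hc : c ≠ 0) (a b : ℝ) :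
    c * Real.exp a / (c * Real.exp a + c * Real.exp b) = 1 / (1 + Real.exp (b - a)) := by
  rw [Real.exp_sub]
  field_simp

lemma frequently_lt_of_not_bddAbove_range {β : Type*} [LinearOrder β] {u : ℕ → β}
    (h : ¬BddAbove (Set.range u)) (b : β) : ∃ᶠ n in atTop, b < u n := by
  by_contra hb
  rw [not_frequently] at hb
  exact h (IsBoundedUnder.bddAbove_range ⟨b, hb.mono fun _ => le_of_not_gt⟩)

lemma frequently_gt_of_not_bddBelow_range {β : Type*} [LinearOrder β] {u : ℕ → β}
    (h : ¬BddBelow (Set.range u)) (b : β) : ∃ᶠ n in atTop, u n < b :=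
  frequently_lt_of_not_bddAbove_range (β := βᵒᵈ) h b

lemma not_tendsto_of_le_abs_sub_succ {u : ℕ → ℝ} {ε : ℝ} (hε : 0 < ε)
    (hu : ∀ n, ε ≤ |u (n + 1) - u n|) (c : ℝ) : ¬Tendsto u atTop (nhds c) := by
  intro hc
  have hdiff : Tendsto (fun n => |u (n + 1) - u n|) atTop (nhds 0) := by
    simpa using ((hc.comp (tendsto_add_atTop_nat 1)).sub hc).abs
  obtain ⟨n, hn⟩ := (hdiff.eventually (gt_mem_nhds hε)).exists
  exact (hu n).not_gt hn

section Walk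

variable {Ω : Type*} {m0 : MeasurableSpace Ω} {μ : Measure Ω}

lemma ProbabilityTheory.iIndepFun.martingale_sum_range_succ {ξ : ℕ → Ω → ℝ}
    (hξm : ∀ k, StronglyMeasurable (ξ k)) (hindep : iIndepFun ξ μ)
    (hint : ∀ k, Integrable (ξ k) μ) (hmean : ∀ k, μ[ξ k] = 0) :
    Martingale (fun n ω => ∑ k ∈ range (n + 1), ξ k ω) (Filtration.natural ξ hξm) μ := by
  have := hindep.isProbabilityMeasure
  set ℱ := Filtration.natural ξ hξm
  have hadp : StronglyAdapted ℱ fun n ω => ∑ k ∈ range (n + 1), ξ k ω := fun n =>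
    Finset.stronglyMeasurable_fun_sum _ fun k hk =>
      (Filtration.stronglyAdapted_natural hξm k).mono (ℱ.mono (mem_range_succ_iff.mp hk))
  refine martingale_nat hadp (fun n => integrable_finsetSum _ fun k _ => hint k) fun n => ?_
  have hsplit : (fun ω => ∑ k ∈ range (n + 1 + 1), ξ k ω) =
      (fun ω => ∑ k ∈ range (n + 1), ξ k ω) + ξ (n + 1) := by
    ext ω; simp [sum_range_succ _ (n + 1)]
  rw [hsplit]
  have hnext : μ[ξ (n + 1)|ℱ n] =ᵐ[μ] fun _ => 0 := by
    simpa [hmean] using iIndepFun.condExp_natural_ae_eq_of_lt hξm hindep (Nat.lt_succ_self n)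
  filter_upwards [condExp_add (integrable_finsetSum _ fun k _ => hint k) (hint (n + 1)) (ℱ n),
    hnext] with ω hsum hξ
  rw [hsum, Pi.add_apply, hξ, condExp_of_stronglyMeasurable (ℱ.le n) (hadp n)
    (integrable_finsetSum _ fun k _ => hint k)]
  simp

lemma MeasureTheory.Martingale.ae_not_bddAbove_and_not_bddBelow [IsFiniteMeasure μ]
    {ℱ : Filtration ℕ m0} {f : ℕ → Ω → ℝ} (hf : Martingale f ℱ μ) {ε : ℝ} {R : NNReal} (hε : 0 < ε)
    (hstep : ∀ ω i, ε ≤ |f (i + 1) ω - f i ω|) (hbdd : ∀ ω i, |f (i + 1) ω - f i ω| ≤ R) :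
    ∀ᵐ ω ∂μ, ¬BddAbove (Set.range fun n => f n ω) ∧ ¬BddBelow (Set.range fun n => f n ω) := by
  have hbdd' : ∀ᵐ ω ∂μ, ∀ i, |f (i + 1) ω - f i ω| ≤ R := .of_forall hbdd
  filter_upwards [hf.submartingale.bddAbove_iff_exists_tendsto hbdd',
    hf.bddAbove_range_iff_bddBelow_range hbdd'] with ω hconv habove_iff_below
  have habove : ¬BddAbove (Set.range fun n => f n ω) := fun h =>
    let ⟨c, hc⟩ := hconv.mp h
    not_tendsto_of_le_abs_sub_succ hε (hstep ω) c hc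
  exact ⟨habove, mt habove_iff_below.mpr habove⟩

def walkStep (b : Bool) : ℝ := if b = false then 1 else -1

lemma integral_walkStep_eq_zero [IsProbabilityMeasure μ] {X : Ω → Bool} (hX : Measurable X)
    (hfair : μ (X ⁻¹' {true}) = 1 / 2) : ∫ ω, walkStep (X ω) ∂μ = 0 := by
  have hfalse : μ (X ⁻¹' {false}) = 1 / 2 := by
    rw [show ({false} : Set Bool) = {true}ᶜ by ext b; simp, Set.preimage_compl,
      prob_compl_eq_one_sub (hX (measurableSet_singleton _)), hfair, one_div,
      ENNReal.one_sub_inv_two]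
  rw [← integral_map hX.aemeasurable (measurable_of_finite walkStep).aestronglyMeasurable,
    integral_fintype .of_finite]
  simp [walkStep, Measure.real, Measure.map_apply hX (measurableSet_singleton _), hfalse, hfair]

lemma abs_walkStep (b : Bool) : |walkStep b| = 1 := by
  cases b <;> simp [walkStep]

lemma ae_not_bddAbove_and_not_bddBelow_walk {X : ℕ → Ω → Bool} (hX : ∀ k, Measurable (X k))
    (hindep : iIndepFun X μ) (hfair : ∀ k, μ (X k ⁻¹' {true}) = 1 / 2) :
    ∀ᵐ ω ∂μ, ¬BddAbove (Set.range fun t => ∑ k ∈ range t, walkStep (X k ω)) ∧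
      ¬BddBelow (Set.range fun t => ∑ k ∈ range t, walkStep (X k ω)) := by
  have := hindep.isProbabilityMeasure
  set ξ : ℕ → Ω → ℝ := fun k => walkStep ∘ X k
  have hξm : ∀ k, StronglyMeasurable (ξ k) :=
    fun k => ((measurable_of_finite walkStep).comp (hX k)).stronglyMeasurable
  have hint : ∀ k, Integrable (ξ k) μ := fun k =>
    .of_bound (hξm k).aestronglyMeasurable 1 (.of_forall fun ω => (abs_walkStep _).le)
  have hmart := (hindep.comp (fun _ => walkStep) fun _ => measurable_of_finite walkStep)
    |>.martingale_sum_range_succ hξm hint fun k => integral_walkStep_eq_zero (hX k) (hfair k)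
  have hstep : ∀ ω i, |∑ k ∈ range (i + 1 + 1), ξ k ω - ∑ k ∈ range (i + 1), ξ k ω| = 1 :=
    fun ω i => by simp [sum_range_succ _ (i + 1), ξ, abs_walkStep]
  filter_upwards [hmart.ae_not_bddAbove_and_not_bddBelow (R := 1) one_pos
    (fun ω i => (hstep ω i).ge) (fun ω i => by simp [hstep])] with ω ⟨habove, hbelow⟩
  have hsub : (Set.range fun n => ∑ k ∈ range (n + 1), ξ k ω) ⊆
      Set.range fun t => ∑ k ∈ range t, walkStep (X k ω) := by
    rintro _ ⟨n, rfl⟩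
    exact ⟨n + 1, rfl⟩
  exact ⟨fun h => habove (h.mono hsub), fun h => hbelow (h.mono hsub)⟩

end Walk

theorem stmt_10_general {Ω : Type*} {m0 : MeasurableSpace Ω} (μ : Measure Ω)
    (η₁ η₂ : ℝ) (hη₂ : 0 < η₂)
    (u₁ u₂ : Bool → Bool → ℝ)
    (hu₁ : ∀ s t, u₁ s t = 1)
    (hu₂ : ∀ s t, u₂ s t = if s = t then (1 : ℝ) else 0)
    (a₁ a₂ : ℕ → Ω → Bool)  -- realized actions of players 1 and 2
    (hmeas : ∀ k, Measurable (a₁ k))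
    -- player 1's actions are i.i.d. fair coin flips
    (hindep : iIndepFun a₁ μ)
    (hfair : ∀ k, μ (a₁ k ⁻¹' {true}) = 1 / 2)
    (p₁ p₂ : ℕ → Ω → ℝ)   -- probability of T, resp. of L
    -- exponential weights with uniform initial weights:
    (hp₁ : ∀ t ω, p₁ t ω =
      (1 / 2) * Real.exp (η₁ * ∑ k ∈ Finset.range t, u₁ true (a₂ k ω)) /
        ((1 / 2) * Real.exp (η₁ * ∑ k ∈ Finset.range t, u₁ true (a₂ k ω)) +
         (1 / 2) * Real.exp (η₁ * ∑ k ∈ Finset.range t, u₁ false (a₂ k ω))))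
    (hp₂ : ∀ t ω, p₂ t ω =
      (1 / 2) * Real.exp (η₂ * ∑ k ∈ Finset.range t, u₂ (a₁ k ω) true) /
        ((1 / 2) * Real.exp (η₂ * ∑ k ∈ Finset.range t, u₂ (a₁ k ω) true) +
         (1 / 2) * Real.exp (η₂ * ∑ k ∈ Finset.range t, u₂ (a₁ k ω) false)))
    (Z : ℕ → Ω → ℤ)
    (hZ : ∀ t ω, Z t ω =
      ∑ k ∈ Finset.range t, (if a₁ k ω = false then (1 : ℤ) else -1)) :
    (∀ t ω, p₁ t ω = 1 / 2) ∧
    (∀ t ω, p₂ t ω = 1 / (1 + Real.exp (η₂ * (Z t ω : ℝ)))) ∧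
    (∀ᵐ ω ∂μ, ¬ ∃ L : ℝ, Tendsto (fun t => p₂ t ω) atTop (nhds L)) := by
  have hp₁_eq : ∀ t ω, p₁ t ω = 1 / 2 := by
    intro t ω
    simp only [hp₁, hu₁, mul_exp_div_mul_exp_add_mul_exp (one_div_ne_zero two_ne_zero), sub_self,
      Real.exp_zero]
    norm_num
  have hZ_walk : ∀ t ω, (Z t ω : ℝ) = ∑ k ∈ range t, walkStep (a₁ k ω) := by
    intro t ω
    simp [hZ, walkStep]
  have hp₂_eq : ∀ t ω, p₂ t ω = 1 / (1 + Real.exp (η₂ * (Z t ω : ℝ))) := by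
    intro t ω
    have hpayoff_gap : ∀ b, u₂ b false - u₂ b true = walkStep b := by
      intro b; cases b <;> simp [hu₂, walkStep]
    rw [hp₂, mul_exp_div_mul_exp_add_mul_exp (one_div_ne_zero two_ne_zero), ← mul_sub,
      ← sum_sub_distrib, hZ_walk]
    simp only [hpayoff_gap]
  refine ⟨hp₁_eq, hp₂_eq, ?_⟩
  filter_upwards [ae_not_bddAbove_and_not_bddBelow_walk hmeas hindep hfair]
    with ω ⟨habove, hbelow⟩ ⟨L, hL⟩
  have hσ : ∀ t, p₂ t ω = Real.sigmoid (-(η₂ * ∑ k ∈ range t, walkStep (a₁ k ω))) := fun t => by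
    rw [hp₂_eq, hZ_walk, Real.sigmoid_def, neg_neg, one_div]
  have hlow : L ≤ Real.sigmoid (-η₂) := le_of_tendsto_of_frequently hL <|
    (frequently_lt_of_not_bddAbove_range habove 1).mono fun t ht => by
      rw [hσ]; exact Real.sigmoid_le (by nlinarith)
  have hhigh : Real.sigmoid η₂ ≤ L := ge_of_tendsto_of_frequently hL <|
    (frequently_gt_of_not_bddBelow_range hbelow (-1)).mono fun t ht => by
      rw [hσ]; exact Real.sigmoid_le (by nlinarith)
  exact (Real.sigmoid_lt (neg_lt_self hη₂)).not_ge (hhigh.trans hlow)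

/-- Example 2.1: in the 2×2 game where player 1's payoff is
identically 1 and player 2's payoff is 1 on {(T,L),(B,R)} and 0 elsewhere,
with exponential weights from uniform initial weights, player 1 always plays
(1/2,1/2) (hence their realized actions are i.i.d. fair coin flips),
`p₂ᵗ(L) = 1/(1+e^{η₂ Z_t})` with `Z_t` a symmetric random walk, and
`p₂ᵗ(L)` almost surely does not converge.  `true` codes T resp. L. -/
theorem stmt_10 {Ω : Type*} {m0 : MeasurableSpace Ω} (μ : Measure Ω)
    [IsProbabilityMeasure μ]
    (η₁ η₂ : ℝ) (hη₁ : 0 < η₁) (hη₂ : 0 < η₂)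
    (u₁ u₂ : Bool → Bool → ℝ)
    (hu₁ : ∀ s t, u₁ s t = 1)
    (hu₂ : ∀ s t, u₂ s t = if s = t then (1 : ℝ) else 0)
    (a₁ a₂ : ℕ → Ω → Bool)  -- realized actions of players 1 and 2
    (hmeas : ∀ k, Measurable (a₁ k))
    -- player 1's actions are i.i.d. fair coin flips
    (hindep : iIndepFun a₁ μ)
    (hfair : ∀ k, μ (a₁ k ⁻¹' {true}) = 1 / 2)
    (p₁ p₂ : ℕ → Ω → ℝ)   -- probability of T, resp. of L
    -- exponential weights with uniform initial weights:
    (hp₁ : ∀ t ω, p₁ t ω =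
      (1 / 2) * Real.exp (η₁ * ∑ k ∈ Finset.range t, u₁ true (a₂ k ω)) /
        ((1 / 2) * Real.exp (η₁ * ∑ k ∈ Finset.range t, u₁ true (a₂ k ω)) +
         (1 / 2) * Real.exp (η₁ * ∑ k ∈ Finset.range t, u₁ false (a₂ k ω))))
    (hp₂ : ∀ t ω, p₂ t ω =
      (1 / 2) * Real.exp (η₂ * ∑ k ∈ Finset.range t, u₂ (a₁ k ω) true) /
        ((1 / 2) * Real.exp (η₂ * ∑ k ∈ Finset.range t, u₂ (a₁ k ω) true) +
         (1 / 2) * Real.exp (η₂ * ∑ k ∈ Finset.range t, u₂ (a₁ k ω) false)))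
    (Z : ℕ → Ω → ℤ)
    (hZ : ∀ t ω, Z t ω =
      ∑ k ∈ Finset.range t, (if a₁ k ω = false then (1 : ℤ) else -1)) :
    (∀ t ω, p₁ t ω = 1 / 2) ∧
    (∀ t ω, p₂ t ω = 1 / (1 + Real.exp (η₂ * (Z t ω : ℝ)))) ∧
    (∀ᵐ ω ∂μ, ¬ ∃ L : ℝ, Tendsto (fun t => p₂ t ω) atTop (nhds L)) :=
  stmt_10_general (m0 := m0) μ η₁ η₂ hη₂ u₁ u₂ hu₁ hu₂ a₁ a₂ hmeas hindep hfair p₁ p₂ hp₁ hp₂ Z hZ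
end

section
/- Let $(p^t)_t$ be the exponential weights process in a finite game $G$ starting from $p^0$ in the interior of $\Delta$, and suppose on some event of positive probability $p^t$ converges to a limit $p$. Then on that event (up to a null set), for each player $i$ and actions $a_i, b_i$ with $p_i(a_i) > 0$, one has $u_i(b_i, p_{-i}) \leq u_i(a_i, p_{-i})$; i.e., the limit $p$ is a Nash equilibrium. -/
/-!
Exponential weights keep the ratio of the weights of two actions equal to its initial value times
`exp (η · cumulative regret)`. On the convergence event with `p_i(a_i) > 0` this ratio converges,
so the cumulative regret of `a_i` against `b_i` is bounded above and its Cesàro averages have a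
nonpositive limit. The regret increments are bounded and, given the past, have mean
`u_i(b_i, p^k_{-i}) - u_i(a_i, p^k_{-i})`; by the strong law for bounded martingale differences
(an L²-bounded martingale plus Kronecker's lemma) their Cesàro averages almost surely have the
same limit as those of their conditional means, namely `u_i(b_i, p_{-i}) - u_i(a_i, p_{-i})`.
-/

open Filter Finset MeasureTheory

theorem sum_range_inv_succ_sq_le_two (n : ℕ) : ∑ k ∈ range n, ((k : ℝ) + 1)⁻¹ ^ 2 ≤ 2 := by
  have h := sum_Ioo_inv_sq_le (α := ℝ) 0 (n + 1)
  rw [← Finset.Ico_add_one_left_eq_Ioo, sum_Ico_eq_sum_range] at h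
  simpa [add_comm, inv_pow] using h

/-- Kronecker's lemma for the weights `k + 1`. -/
theorem tendsto_cesaro_zero_of_tendsto_sum_inv_succ_mul {a : ℕ → ℝ} {l : ℝ}
    (h : Tendsto (fun n ↦ ∑ k ∈ range n, ((k : ℝ) + 1)⁻¹ * a k) atTop (nhds l)) :
    Tendsto (fun n : ℕ ↦ (n : ℝ)⁻¹ * ∑ k ∈ range n, a k) atTop (nhds 0) := by
  set b : ℕ → ℝ := fun n ↦ ∑ k ∈ range n, ((k : ℝ) + 1)⁻¹ * a k
  have summation_by_parts : ∀ n, ∑ k ∈ range n, a k = n * b n - ∑ k ∈ range n, b k := by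
    intro n
    induction n with
    | zero => simp
    | succ n ih =>
      simp only [sum_range_succ, ih, b]
      push_cast
      field_simp
      ring
  have := h.sub h.cesaro
  rw [sub_self] at this
  refine this.congr' ?_
  filter_upwards [eventually_ne_atTop 0] with n hn
  rw [summation_by_parts, mul_sub, ← mul_assoc, inv_mul_cancel₀ (by exact_mod_cast hn), one_mul]

theorem le_zero_of_tendsto_cesaro_of_sum_le {x : ℕ → ℝ} {C L : ℝ}
    (hC : ∀ n, ∑ k ∈ range n, x k ≤ C)
    (hL : Tendsto (fun n : ℕ ↦ (n : ℝ)⁻¹ * ∑ k ∈ range n, x k) atTop (nhds L)) : L ≤ 0 := by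
  have hC' : Tendsto (fun n : ℕ ↦ (n : ℝ)⁻¹ * C) atTop (nhds 0) := by
    simpa using tendsto_inv_atTop_nhds_zero_nat.mul_const C
  exact le_of_tendsto_of_tendsto hL hC' (Eventually.of_forall fun n ↦
    mul_le_mul_of_nonneg_left (hC n) (by positivity))

section ExpWeights

variable {α : Type*} {w g : ℕ → α → ℝ} {Z : ℕ → ℝ} {η : ℝ}

theorem expWeights_div_eq (hpos : ∀ t b, 0 < w t b)
    (hrec : ∀ t b, w (t + 1) b = w t b * Real.exp (η * g t b) / Z t) (a b : α) (t : ℕ) :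
    w t b / w t a = w 0 b / w 0 a * Real.exp (η * ∑ k ∈ range t, (g k b - g k a)) := by
  induction t with
  | zero => simp
  | succ t ih =>
    have hZ : Z t ≠ 0 := by
      intro hZ
      simpa [hrec, hZ] using hpos (t + 1) a
    have ha := (hpos t a).ne'
    rw [sum_range_succ, mul_add, Real.exp_add, ← mul_assoc, ← ih, hrec, hrec, mul_sub,
      Real.exp_sub]
    field_simp

theorem le_zero_of_tendsto_cesaro_regret (hη : 0 < η) (hpos : ∀ t b, 0 < w t b)
    (hrec : ∀ t b, w (t + 1) b = w t b * Real.exp (η * g t b) / Z t) {a b : α}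
    (hbdd : BddAbove (Set.range fun t ↦ w t b / w t a)) {L : ℝ}
    (hL : Tendsto (fun n : ℕ ↦ (n : ℝ)⁻¹ * ∑ k ∈ range n, (g k b - g k a)) atTop (nhds L)) :
    L ≤ 0 := by
  obtain ⟨M, hM⟩ := hbdd
  have hw0 : 0 < w 0 b / w 0 a := div_pos (hpos 0 b) (hpos 0 a)
  refine le_zero_of_tendsto_cesaro_of_sum_le (C := Real.log (M / (w 0 b / w 0 a)) / η)
    (fun t ↦ ?_) hL
  have hexp : Real.exp (η * ∑ k ∈ range t, (g k b - g k a)) ≤ M / (w 0 b / w 0 a) := by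
    rw [le_div_iff₀' hw0, ← expWeights_div_eq hpos hrec]
    exact hM ⟨t, rfl⟩
  rw [le_div_iff₀' hη, Real.le_log_iff_exp_le ((Real.exp_pos _).trans_le hexp)]
  exact hexp

end ExpWeights

section MartingaleDifference

variable {Ω : Type*} {m0 : MeasurableSpace Ω} {μ : Measure Ω} [IsFiniteMeasure μ]
  {ℱ : Filtration ℕ m0} {d : ℕ → Ω → ℝ} {C : ℝ}

theorem integral_mul_eq_zero_of_condExp_eq_zero {m : MeasurableSpace Ω} (hm : m ≤ m0)
    {Y f : Ω → ℝ} (hY : StronglyMeasurable[m] Y) (hYf : Integrable (Y * f) μ)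
    (hf : Integrable f μ) (hf0 : μ[f | m] =ᵐ[μ] 0) : ∫ ω, Y ω * f ω ∂μ = 0 := by
  calc ∫ ω, Y ω * f ω ∂μ = ∫ ω, μ[Y * f | m] ω ∂μ := (integral_condExp hm).symm
    _ = ∫ ω, (Y * μ[f | m]) ω ∂μ :=
      integral_congr_ae (condExp_mul_of_stronglyMeasurable_left hY hYf hf)
    _ = ∫ _, 0 ∂μ := integral_congr_ae (hf0.mono fun ω h ↦ by simp [h])
    _ = 0 := integral_zero _ _

theorem memLp_sum_inv_succ_mul (p : ENNReal) (hd : ∀ k, AEStronglyMeasurable (d k) μ)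
    (hbd : ∀ k, ∀ᵐ ω ∂μ, |d k ω| ≤ C) (n : ℕ) :
    MemLp (fun ω ↦ ∑ k ∈ range n, ((k : ℝ) + 1)⁻¹ * d k ω) p μ :=
  memLp_finsetSum _ fun k _ ↦ (MemLp.of_bound (hd k) C (by simpa using hbd k)).const_mul _

theorem stronglyMeasurable_sum_inv_succ_mul (hd : ∀ k, StronglyMeasurable[ℱ (k + 1)] (d k))
    (n : ℕ) : StronglyMeasurable[ℱ n] fun ω ↦ ∑ k ∈ range n, ((k : ℝ) + 1)⁻¹ * d k ω :=
  Finset.stronglyMeasurable_fun_sum _ fun k hk ↦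
    ((hd k).mono (ℱ.mono (mem_range.mp hk))).const_mul _

theorem martingale_sum_inv_succ_mul (hd : ∀ k, StronglyMeasurable[ℱ (k + 1)] (d k))
    (hint : ∀ k, Integrable (d k) μ) (hcond : ∀ k, μ[d k | ℱ k] =ᵐ[μ] 0) :
    Martingale (fun n ω ↦ ∑ k ∈ range n, ((k : ℝ) + 1)⁻¹ * d k ω) ℱ μ := by
  refine martingale_of_condExp_sub_eq_zero_nat (stronglyMeasurable_sum_inv_succ_mul hd)
    (fun n ↦ integrable_finsetSum _ fun k _ ↦ (hint k).const_mul _) (fun n ↦ ?_)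
  have hsucc : (fun ω ↦ ∑ k ∈ range (n + 1), ((k : ℝ) + 1)⁻¹ * d k ω) -
      (fun ω ↦ ∑ k ∈ range n, ((k : ℝ) + 1)⁻¹ * d k ω) = ((n : ℝ) + 1)⁻¹ • d n := by
    ext ω
    simp [sum_range_succ]
  rw [hsucc]
  filter_upwards [condExp_smul (μ := μ) ((n : ℝ) + 1)⁻¹ (d n) (ℱ n), hcond n] with ω h h0
  simp [h, h0]

theorem integral_sq_sum_inv_succ_mul_le (hd : ∀ k, StronglyMeasurable[ℱ (k + 1)] (d k))
    (hbd : ∀ k, ∀ᵐ ω ∂μ, |d k ω| ≤ C) (hcond : ∀ k, μ[d k | ℱ k] =ᵐ[μ] 0) (n : ℕ) :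
    ∫ ω, (∑ k ∈ range n, ((k : ℝ) + 1)⁻¹ * d k ω) ^ 2 ∂μ ≤
      μ.real Set.univ * C ^ 2 * ∑ k ∈ range n, ((k : ℝ) + 1)⁻¹ ^ 2 := by
  have hm : ∀ k, AEStronglyMeasurable (d k) μ :=
    fun k ↦ ((hd k).mono (ℱ.le _)).aestronglyMeasurable
  have hLp : ∀ k p, MemLp (d k) p μ := fun k p ↦ MemLp.of_bound (hm k) C (by simpa using hbd k)
  induction n with
  | zero => simp
  | succ n ih =>
    set S : Ω → ℝ := fun ω ↦ ∑ k ∈ range n, ((k : ℝ) + 1)⁻¹ * d k ω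
    change ∫ ω, S ω ^ 2 ∂μ ≤ _ at ih
    have hS : Integrable (fun ω ↦ S ω ^ 2) μ := (memLp_sum_inv_succ_mul 2 hm hbd n).integrable_sq
    have hSd : Integrable (S * d n) μ :=
      (memLp_sum_inv_succ_mul 2 hm hbd n).integrable_mul (hLp n 2)
    have hd2 : Integrable (fun ω ↦ d n ω ^ 2) μ := (hLp n 2).integrable_sq
    have orthogonal : ∫ ω, S ω * d n ω ∂μ = 0 :=
      integral_mul_eq_zero_of_condExp_eq_zero (ℱ.le n)
        (stronglyMeasurable_sum_inv_succ_mul hd n) hSd ((hLp n 1).integrable le_rfl) (hcond n)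
    have hd2C : ∫ ω, d n ω ^ 2 ∂μ ≤ μ.real Set.univ * C ^ 2 := by
      rw [← smul_eq_mul, ← integral_const]
      refine integral_mono_ae hd2 (integrable_const _) ((hbd n).mono fun ω h ↦ ?_)
      nlinarith [abs_nonneg (d n ω), sq_abs (d n ω)]
    have hexpand : ∀ ω, (∑ k ∈ range (n + 1), ((k : ℝ) + 1)⁻¹ * d k ω) ^ 2 =
        S ω ^ 2 + 2 * ((n : ℝ) + 1)⁻¹ * (S ω * d n ω) + ((n : ℝ) + 1)⁻¹ ^ 2 * d n ω ^ 2 := by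
      intro ω
      simp only [S, sum_range_succ]
      ring
    simp_rw [hexpand]
    rw [integral_add, integral_add, integral_const_mul, integral_const_mul, orthogonal,
      sum_range_succ]
    · nlinarith [mul_le_mul_of_nonneg_left hd2C (sq_nonneg ((n : ℝ) + 1)⁻¹)]
    · exact hS
    · exact hSd.const_mul _
    · exact hS.add (hSd.const_mul _)
    · exact hd2.const_mul _

theorem ae_tendsto_cesaro_of_condExp_eq_zero (hd : ∀ k, StronglyMeasurable[ℱ (k + 1)] (d k))
    (hbd : ∀ k, ∀ᵐ ω ∂μ, |d k ω| ≤ C) (hcond : ∀ k, μ[d k | ℱ k] =ᵐ[μ] 0) :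
    ∀ᵐ ω ∂μ, Tendsto (fun n : ℕ ↦ (n : ℝ)⁻¹ * ∑ k ∈ range n, d k ω) atTop (nhds 0) := by
  have hm : ∀ k, AEStronglyMeasurable (d k) μ :=
    fun k ↦ ((hd k).mono (ℱ.le _)).aestronglyMeasurable
  set W : ℕ → Ω → ℝ := fun n ω ↦ ∑ k ∈ range n, ((k : ℝ) + 1)⁻¹ * d k ω
  have hW : Martingale W ℱ μ := martingale_sum_inv_succ_mul hd
    (fun k ↦ Integrable.of_bound (hm k) C (by simpa using hbd k)) hcond
  have hL1 : ∀ n, eLpNorm (W n) 1 μ ≤ ENNReal.ofReal (μ.real Set.univ * (1 + 2 * C ^ 2)) := by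
    intro n
    have hsq := (memLp_sum_inv_succ_mul 2 hm hbd n).integrable_sq
    rw [eLpNorm_one_eq_lintegral_enorm,
      ← ofReal_integral_norm_eq_lintegral_enorm (hW.integrable n)]
    refine ENNReal.ofReal_le_ofReal ?_
    calc ∫ ω, ‖W n ω‖ ∂μ ≤ ∫ ω, (1 + W n ω ^ 2) ∂μ :=
          integral_mono (hW.integrable n).norm ((integrable_const 1).add hsq) fun ω ↦ by
            rw [Real.norm_eq_abs]; nlinarith [sq_abs (W n ω), sq_nonneg (|W n ω| - 1)]
      _ = μ.real Set.univ + ∫ ω, W n ω ^ 2 ∂μ := by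
          rw [integral_add (integrable_const 1) hsq, integral_const, smul_eq_mul, mul_one]
      _ ≤ μ.real Set.univ + μ.real Set.univ * C ^ 2 * 2 := by
          grw [integral_sq_sum_inv_succ_mul_le hd hbd hcond n, sum_range_inv_succ_sq_le_two n]
      _ = μ.real Set.univ * (1 + 2 * C ^ 2) := by ring
  filter_upwards [hW.submartingale.ae_tendsto_limitProcess hL1] with ω hω
  exact tendsto_cesaro_zero_of_tendsto_sum_inv_succ_mul hω

theorem ae_tendsto_cesaro_sub_condExp {X : ℕ → Ω → ℝ}
    (hX : ∀ k, StronglyMeasurable[ℱ (k + 1)] (X k)) (hbd : ∀ k, ∀ᵐ ω ∂μ, |X k ω| ≤ C) :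
    ∀ᵐ ω ∂μ, Tendsto (fun n : ℕ ↦ (n : ℝ)⁻¹ * ∑ k ∈ range n, (X k ω - μ[X k | ℱ k] ω))
      atTop (nhds 0) := by
  have hint : ∀ k, Integrable (X k) μ := fun k ↦
    Integrable.of_bound ((hX k).mono (ℱ.le _)).aestronglyMeasurable C (by simpa using hbd k)
  refine ae_tendsto_cesaro_of_condExp_eq_zero (d := fun k ↦ X k - μ[X k | ℱ k]) (C := 2 * C)
    (fun k ↦ (hX k).sub (stronglyMeasurable_condExp.mono (ℱ.mono k.le_succ))) (fun k ↦ ?_)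
    (fun k ↦ ?_)
  · filter_upwards [hbd k, ae_bdd_abs_condExp_of_ae_bdd_abs (m := ℱ k) (hbd k)] with ω h1 h2
    exact (abs_sub _ _).trans (by linarith)
  · filter_upwards [condExp_sub (hint k) (integrable_condExp (m := ℱ k) (f := X k)) (ℱ k),
      condExp_condExp_of_le (f := X k) le_rfl (ℱ.le k)] with ω h1 h2
    simp [h1, h2]

variable {α : Type*} [Fintype α] [MeasurableSpace α] [MeasurableSingletonClass α]

theorem condExp_comp_eq_sum_mul {m : MeasurableSpace Ω}
    {Y : Ω → α} (hY : Measurable[m0] Y) {π : α → Ω → ℝ}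
    (hπ : ∀ c, μ[{ω | Y ω = c}.indicator (fun _ ↦ (1 : ℝ)) | m] =ᵐ[μ] π c) (g : α → ℝ) :
    μ[g ∘ Y | m] =ᵐ[μ] fun ω ↦ ∑ c, g c * π c ω := by
  set I : α → Ω → ℝ := fun c ↦ {ω | Y ω = c}.indicator (fun _ ↦ (1 : ℝ))
  have hI : ∀ c, Integrable (I c) μ :=
    fun c ↦ (integrable_const 1).indicator (hY (measurableSet_singleton c))
  have hrep : g ∘ Y = ∑ c, g c • I c := by
    ext ω
    classical
    simp [I, Set.indicator_apply]
  have hsmul : ∀ᵐ ω ∂μ, ∀ c, μ[g c • I c | m] ω = g c * π c ω := by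
    refine ae_all_iff.2 fun c ↦ ?_
    filter_upwards [condExp_smul (g c) (I c) m, hπ c] with ω h1 h2
    rw [h1, Pi.smul_apply, smul_eq_mul, h2]
  rw [hrep]
  filter_upwards [condExp_finsetSum (s := univ) (fun c _ ↦ (hI c).smul (g c)) m, hsmul]
    with ω h1 h2
  simp only [h1, Finset.sum_apply, h2]

theorem ae_tendsto_cesaro_sub_sum_mul {Y : ℕ → Ω → α} (hY : ∀ k, Measurable[ℱ (k + 1)] (Y k))
    {π : ℕ → α → Ω → ℝ}
    (hπ : ∀ k c, μ[{ω | Y k ω = c}.indicator (fun _ ↦ (1 : ℝ)) | ℱ k] =ᵐ[μ] π k c)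
    (g : α → ℝ) :
    ∀ᵐ ω ∂μ, Tendsto (fun n : ℕ ↦ (n : ℝ)⁻¹ * ∑ k ∈ range n, (g (Y k ω) - ∑ c, g c * π k c ω))
      atTop (nhds 0) := by
  have hmean : ∀ᵐ ω ∂μ, ∀ k, μ[g ∘ Y k | ℱ k] ω = ∑ c, g c * π k c ω :=
    ae_all_iff.2 fun k ↦ condExp_comp_eq_sum_mul ((hY k).mono (ℱ.le _) le_rfl) (hπ k) g
  have hlln := ae_tendsto_cesaro_sub_condExp (μ := μ) (X := fun k ↦ g ∘ Y k)
    (C := ∑ c, |g c|) (fun k ↦ ((measurable_of_countable g).comp (hY k)).stronglyMeasurable)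
    (fun k ↦ Eventually.of_forall fun ω ↦ single_le_sum (f := fun c ↦ |g c|)
      (fun c _ ↦ abs_nonneg _) (mem_univ _))
  filter_upwards [hlln, hmean] with ω hlln hmean
  simpa only [hmean, Function.comp_apply] using hlln

end MartingaleDifference

section Profiles

variable {N : Type*} [Fintype N] [DecidableEq N] {A : N → Type*} [∀ i, DecidableEq (A i)]

theorem prod_dite_eq_ite_mul_prod_compl (q : ∀ j, A j → ℝ) {i : N} (b : A i) (c : ∀ j, A j) :
    (∏ j, if h : j = i then (if c j = h ▸ b then (1:ℝ) else 0) else q j (c j)) =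
      (if c i = b then 1 else 0) * ∏ j ∈ {i}ᶜ, q j (c j) := by
  rw [Fintype.prod_eq_mul_prod_compl i, dif_pos rfl]
  congr 1
  exact prod_congr rfl fun j hj ↦ dif_neg (by simpa using hj)

def Equiv.piUpdateFiber (i : N) (b : A i) : (∀ j, A j) ≃ A i × {c : ∀ j, A j // c i = b} where
  toFun c := (c i, ⟨Function.update c i b, by simp⟩)
  invFun d := Function.update d.2.1 i d.1
  left_inv c := by simp
  right_inv d := by
    obtain ⟨x, c, hc⟩ := d
    simp [← hc]

variable [∀ i, Fintype (A i)]

theorem continuous_sum_prod_dite_mul (i : N) (b : A i) (f : (∀ j, A j) → ℝ) :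
    Continuous fun q : ∀ j, A j → ℝ ↦ ∑ c : ∀ j, A j,
      (∏ j, if h : j = i then (if c j = h ▸ b then (1:ℝ) else 0) else q j (c j)) * f c := by
  simp only [prod_dite_eq_ite_mul_prod_compl]
  fun_prop

theorem sum_prod_mul_apply_update (q : ∀ j, A j → ℝ) {i : N} (hq : ∑ x, q i x = 1) (b : A i)
    (f : (∀ j, A j) → ℝ) :
    ∑ c : ∀ j, A j, (∏ j, q j (c j)) * f (Function.update c i b) =
      ∑ c : ∀ j, A j,
        (∏ j, if h : j = i then (if c j = h ▸ b then (1:ℝ) else 0) else q j (c j)) * f c := by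
  simp only [prod_dite_eq_ite_mul_prod_compl, Fintype.prod_eq_mul_prod_compl i (fun j ↦ q j _)]
  rw [← (Equiv.piUpdateFiber i b).symm.sum_comp, ← (Equiv.piUpdateFiber i b).symm.sum_comp,
    Fintype.sum_prod_type, Fintype.sum_prod_type]
  have hcompl : ∀ (c : ∀ j, A j) x, ∏ j ∈ {i}ᶜ, q j (Function.update c i x j) =
      ∏ j ∈ {i}ᶜ, q j (c j) :=
    fun c x ↦ prod_congr rfl fun j hj ↦ by rw [Function.update_of_ne (by simpa using hj)]
  simp only [Equiv.piUpdateFiber, Equiv.coe_fn_symm_mk, hcompl, Function.update_self,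
    Function.update_idem, ite_mul, one_mul, zero_mul]
  simp only [mul_assoc, ← mul_sum, ← sum_mul, hq, one_mul]
  rw [sum_comm]
  simp only [sum_ite_eq', mem_univ, if_true]

end Profiles

theorem stmt_11_general {Ω : Type*} {m0 : MeasurableSpace Ω} (μ : Measure Ω)
    [IsProbabilityMeasure μ] (ℱ : Filtration ℕ m0)
    {N : Type*} [Fintype N] [DecidableEq N]
    (A : N → Type*) [∀ i, Fintype (A i)] [∀ i, DecidableEq (A i)]
    [∀ i, MeasurableSpace (A i)] [∀ i, MeasurableSingletonClass (A i)]
    (u : ∀ i : N, (∀ j, A j) → ℝ) (η : N → ℝ) (hη : ∀ i, 0 < η i)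
    (pt : ℕ → Ω → ∀ i, A i → ℝ)   -- mixed action profiles
    (aa : ℕ → Ω → ∀ i, A i)        -- realized action profiles
    (ha : ∀ t, Measurable[ℱ (t + 1)] (aa t))
    (hpos : ∀ t ω i b, 0 < pt t ω i b)
    (hsum : ∀ t ω i, ∑ b, pt t ω i b = 1)
    -- exponential weights recurrence:
    (hEW : ∀ t ω i (b : A i),
      pt (t + 1) ω i b =
        pt t ω i b * Real.exp (η i * u i (Function.update (aa t ω) i b)) /
          ∑ c : A i,
            pt t ω i c * Real.exp (η i * u i (Function.update (aa t ω) i c)))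
    -- given the past, the players draw their actions independently
    -- according to the current mixed profile:
    (hlaw : ∀ t (b : ∀ i, A i),
      μ[({ω | aa t ω = b}).indicator (fun _ => (1 : ℝ)) | ℱ t]
        =ᵐ[μ] fun ω => ∏ i, pt t ω i (b i))
    -- expected payoff to player i of action b against the mixed profile q:
    (dev : ∀ i : N, A i → (∀ j, A j → ℝ) → ℝ)
    (hdev : ∀ i b q, dev i b q =
      ∑ a : ∀ j, A j,
        (∏ j, if h : j = i then (if a j = h ▸ b then (1:ℝ) else 0)
              else q j (a j)) * u i a)
    -- the convergence event:
    (E : Set Ω)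
    (p : Ω → ∀ i, A i → ℝ)
    (hconv : ∀ ω ∈ E, ∀ i (b : A i),
      Tendsto (fun t => pt t ω i b) atTop (nhds (p ω i b))) :
    ∀ᵐ ω ∂μ, ω ∈ E →
      ∀ i (ai bi : A i), 0 < p ω i ai → dev i bi (p ω) ≤ dev i ai (p ω) := by
  set regret : ∀ i, A i → A i → (∀ j, A j) → ℝ :=
    fun i a b c ↦ u i (Function.update c i b) - u i (Function.update c i a)
  have hlln : ∀ᵐ ω ∂μ, ∀ i (a b : A i), Tendsto (fun n : ℕ ↦ (n : ℝ)⁻¹ * ∑ k ∈ range n,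
      (regret i a b (aa k ω) - ∑ c, regret i a b c * ∏ j, pt k ω j (c j))) atTop (nhds 0) := by
    simp only [ae_all_iff]
    exact fun i a b ↦ ae_tendsto_cesaro_sub_sum_mul ha hlaw (regret i a b)
  have hmean : ∀ k ω i (a b : A i), ∑ c, regret i a b c * ∏ j, pt k ω j (c j) =
      dev i b (pt k ω) - dev i a (pt k ω) := by
    intro k ω i a b
    rw [hdev, hdev, ← sum_prod_mul_apply_update _ (hsum k ω i),
      ← sum_prod_mul_apply_update _ (hsum k ω i), ← sum_sub_distrib]
    exact sum_congr rfl fun c _ ↦ by ring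
  filter_upwards [hlln] with ω hlln hωE i a b hpa
  have hpt : Tendsto (fun t ↦ pt t ω) atTop (nhds (p ω)) :=
    tendsto_pi_nhds.2 fun j ↦ tendsto_pi_nhds.2 (hconv ω hωE j)
  have hdev_tendsto : ∀ b, Tendsto (fun t ↦ dev i b (pt t ω)) atTop (nhds (dev i b (p ω))) := by
    simp only [hdev]
    exact fun b ↦ ((continuous_sum_prod_dite_mul i b (u i)).tendsto _).comp hpt
  have hcesaro := (hlln i a b).add ((hdev_tendsto b).sub (hdev_tendsto a)).cesaro
  refine sub_nonpos.1 (le_zero_of_tendsto_cesaro_regret (hη i) (hpos · ω i) (hEW · ω i)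
    ((hconv ω hωE i b).div (hconv ω hωE i a) hpa.ne').bddAbove_range ?_)
  simpa [hmean, ← mul_add, ← sum_add_distrib, regret] using hcesaro

/-- part of Theorem 4.2: if the exponential weights process,
started in the interior of `Δ`, converges on an event of positive
probability, then almost surely on that event the limit is a Nash
equilibrium. -/
theorem stmt_11 {Ω : Type*} {m0 : MeasurableSpace Ω} (μ : Measure Ω)
    [IsProbabilityMeasure μ] (ℱ : Filtration ℕ m0)
    {N : Type*} [Fintype N] [DecidableEq N]
    (A : N → Type*) [∀ i, Fintype (A i)] [∀ i, DecidableEq (A i)]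
    [∀ i, MeasurableSpace (A i)] [∀ i, MeasurableSingletonClass (A i)]
    (u : ∀ i : N, (∀ j, A j) → ℝ) (η : N → ℝ) (hη : ∀ i, 0 < η i)
    (pt : ℕ → Ω → ∀ i, A i → ℝ)   -- mixed action profiles
    (aa : ℕ → Ω → ∀ i, A i)        -- realized action profiles
    (ha : ∀ t, Measurable[ℱ (t + 1)] (aa t))
    (hpos : ∀ t ω i b, 0 < pt t ω i b)
    (hsum : ∀ t ω i, ∑ b, pt t ω i b = 1)
    -- exponential weights recurrence:
    (hEW : ∀ t ω i (b : A i),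
      pt (t + 1) ω i b =
        pt t ω i b * Real.exp (η i * u i (Function.update (aa t ω) i b)) /
          ∑ c : A i,
            pt t ω i c * Real.exp (η i * u i (Function.update (aa t ω) i c)))
    -- given the past, the players draw their actions independently
    -- according to the current mixed profile:
    (hlaw : ∀ t (b : ∀ i, A i),
      μ[({ω | aa t ω = b}).indicator (fun _ => (1 : ℝ)) | ℱ t]
        =ᵐ[μ] fun ω => ∏ i, pt t ω i (b i))
    -- expected payoff to player i of action b against the mixed profile q:
    (dev : ∀ i : N, A i → (∀ j, A j → ℝ) → ℝ)
    (hdev : ∀ i b q, dev i b q =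
      ∑ a : ∀ j, A j,
        (∏ j, if h : j = i then (if a j = h ▸ b then (1:ℝ) else 0)
              else q j (a j)) * u i a)
    -- the convergence event:
    (E : Set Ω) (hE : MeasurableSet E) (hEpos : 0 < μ E)
    (p : Ω → ∀ i, A i → ℝ)
    (hconv : ∀ ω ∈ E, ∀ i (b : A i),
      Tendsto (fun t => pt t ω i b) atTop (nhds (p ω i b))) :
    ∀ᵐ ω ∂μ, ω ∈ E →
      ∀ i (ai bi : A i), 0 < p ω i ai → dev i bi (p ω) ≤ dev i ai (p ω) :=
  stmt_11_general μ ℱ A u η hη pt aa ha hpos hsum hEW hlaw dev hdev E p hconv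
end

section
/- Let $(H_t)_{t\geq 0}$ be a nondecreasing sequence of events on a filtered probability space carrying a homogeneous Markov chain $(p^t)$ with values in a set $\Delta$, let $H_\infty = \cup_t H_t$, let $K \subseteq \Delta$, and set $D = \inf_{p \in K} \mathbb{P}_p(H_\infty)$. Suppose: (i) $D > 0$; (ii) for every $p^0 \in K$ and $n_0$ with $\mathbb{P}_{p^0}(H_{n_0}) \geq D/2$, letting $\tau = \inf\{t \geq n_0 : p^t \in K\}$ one has $H_{n_0}^c = \{\tau < \infty\}$ and the strong Markov property gives $\mathbb{P}_{p^0}(H_\infty \mid \tau < \infty) \geq D$. Then $D \geq D + \frac{D}{2}(1-D)$, and hence $D = 1$. -/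
/-!
Fix a starting point `p₀ ∈ K`. Since `ℙ(H_∞) ≥ D > D/2` and `H_∞` is the increasing union of the
`H_t`, some `H_{n₀}` already has probability `x ≥ D/2`. Off `H_{n₀}` the chain returns to `K`, and
restarting there escapes forever with probability at least `D`, so
`ℙ(H_∞) ≥ x + D (1 - x) = D + (1 - D) x ≥ D + (D/2)(1 - D)`.
Taking the infimum over `p₀ ∈ K` gives `D ≥ D + (D/2)(1 - D)`, so `(D/2)(1 - D) = 0` and `D = 1`.
-/

open MeasureTheory ENNReal

namespace ENNReal

theorem add_mul_one_sub_comm {a b : ℝ≥0∞} (ha : a ≤ 1) (hb : b ≤ 1) :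
    a + b * (1 - a) = b + a * (1 - b) := by
  have hab : a * b ≠ ⊤ := mul_ne_top (ha.trans_lt one_lt_top).ne (hb.trans_lt one_lt_top).ne
  refine WithTop.add_right_cancel hab ?_
  calc a + b * (1 - a) + a * b = a + b := by
        rw [add_assoc, mul_comm a b, ← mul_add, tsub_add_cancel_of_le ha, mul_one]
    _ = b + a * (1 - b) + a * b := by
        rw [add_assoc, ← mul_add, tsub_add_cancel_of_le hb, mul_one, add_comm]

theorem eq_one_of_add_half_mul_one_sub_le {D : ℝ≥0∞} (hD0 : D ≠ 0) (hD1 : D ≤ 1)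
    (h : D + D / 2 * (1 - D) ≤ D) : D = 1 := by
  have hDtop : D ≠ ⊤ := (hD1.trans_lt one_lt_top).ne
  have hzero : D / 2 * (1 - D) = 0 :=
    nonpos_iff_eq_zero.mp (ENNReal.le_of_add_le_add_left hDtop (by rwa [add_zero]))
  rcases mul_eq_zero.mp hzero with hhalf | hsub
  · exact absurd ((ENNReal.div_eq_zero_iff.mp hhalf).resolve_right ofNat_ne_top) hD0
  · exact le_antisymm hD1 (tsub_eq_zero_iff_le.mp hsub)

end ENNReal

theorem add_mul_prob_compl_le {Ω : Type*} [MeasurableSpace Ω] {μ : Measure Ω}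
    [IsProbabilityMeasure μ] {A B : Set Ω} {D : ℝ≥0∞} (hA : MeasurableSet A) (hAB : A ⊆ B)
    (hB : D * μ Aᶜ ≤ μ (B ∩ Aᶜ)) :
    μ A + D * (1 - μ A) ≤ μ B := by
  calc μ A + D * (1 - μ A) = μ A + D * μ Aᶜ := by rw [prob_compl_eq_one_sub hA]
    _ ≤ μ (B ∩ A) + μ (B \ A) := by
        rw [Set.inter_eq_self_of_subset_right hAB, Set.sdiff_eq]
        gcongr
    _ = μ B := measure_inter_add_sdiff B hA

theorem add_half_mul_one_sub_le_prob_iUnion {Ω : Type*} [MeasurableSpace Ω] {μ : Measure Ω}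
    [IsProbabilityMeasure μ] {H : ℕ → Set Ω} (hmono : Monotone H)
    (hHmeas : ∀ t, MeasurableSet (H t)) {D : ℝ≥0∞} (hD0 : D ≠ 0) (hD1 : D ≤ 1)
    (hDle : D ≤ μ (⋃ t, H t))
    (hrestart : ∀ n, D / 2 ≤ μ (H n) → D * μ (H n)ᶜ ≤ μ ((⋃ t, H t) ∩ (H n)ᶜ)) :
    D + D / 2 * (1 - D) ≤ μ (⋃ t, H t) := by
  obtain ⟨n, hn⟩ : ∃ n, D / 2 < μ (H n) := by
    rw [← lt_iSup_iff, ← hmono.measure_iUnion]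
    exact (ENNReal.half_lt_self hD0 (hD1.trans_lt one_lt_top).ne).trans_le hDle
  calc D + D / 2 * (1 - D) = D + (1 - D) * (D / 2) := by rw [mul_comm]
    _ ≤ D + (1 - D) * μ (H n) := by gcongr
    _ = D + μ (H n) * (1 - D) := by rw [mul_comm]
    _ = μ (H n) + D * (1 - μ (H n)) := (add_mul_one_sub_comm prob_le_one hD1).symm
    _ ≤ μ (⋃ t, H t) :=
        add_mul_prob_compl_le (hHmeas n) (Set.subset_iUnion H n) (hrestart n hn.le)

theorem stmt_16_general {Ω Δ : Type*} [MeasurableSpace Ω]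
    (P : Δ → Measure Ω) (hP : ∀ p, IsProbabilityMeasure (P p))
    (H : ℕ → Set Ω) (hmono : Monotone H)
    (Hinf : Set Ω) (hHinf : Hinf = ⋃ t, H t)
    (hHmeas : ∀ t, MeasurableSet (H t))
    (K : Set Δ) (hKne : K.Nonempty)
    (τ : ℕ → Ω → ℕ∞)
    (D : ℝ≥0∞) (hD : D = ⨅ (p : Δ) (_ : p ∈ K), P p Hinf)
    (hDpos : 0 < D)
    -- hypothesis (ii): for suitable n₀, the complement of H_{n₀} is the event
    -- of returning to K after n₀, and the strong Markov property gives
    -- ℙ(H_∞ | τ < ∞) ≥ D: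
    (hii : ∀ p₀ ∈ K, ∀ n₀ : ℕ, D / 2 ≤ P p₀ (H n₀) →
      (H n₀)ᶜ = {ω | τ n₀ ω < ⊤} ∧
      D * P p₀ {ω | τ n₀ ω < ⊤} ≤ P p₀ (Hinf ∩ {ω | τ n₀ ω < ⊤})) :
    D + D / 2 * (1 - D) ≤ D ∧ D = 1 := by
  subst hHinf
  have hDle : ∀ p ∈ K, D ≤ P p (⋃ t, H t) := fun p hp => hD ▸ iInf₂_le p hp
  obtain ⟨p, hp⟩ := hKne
  have hD1 : D ≤ 1 := (hDle p hp).trans prob_le_one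
  have hbound : D + D / 2 * (1 - D) ≤ D := by
    refine (le_iInf₂ fun p₀ hp₀ => ?_).trans_eq hD.symm
    refine add_half_mul_one_sub_le_prob_iUnion hmono hHmeas hDpos.ne' hD1 (hDle p₀ hp₀) ?_
    intro n hn
    obtain ⟨hcompl, hrestart⟩ := hii p₀ hp₀ n hn
    rwa [hcompl]
  exact ⟨hbound, eq_one_of_add_half_mul_one_sub_le hDpos.ne' hD1 hbound⟩

/-- bootstrapping argument, Lemma 3.4: if from every starting
point in `K` the nondecreasing events `H_t` with union `H_∞` have probability
at least `D > 0`, and restarting the chain upon returning to `K` after a time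
`n₀` at which `ℙ(H_{n₀}) ≥ D/2` yields `ℙ(H_∞ | τ < ∞) ≥ D`, then
`D ≥ D + (D/2)(1-D)` and hence `D = 1`. -/
theorem stmt_16 {Ω Δ : Type*} [MeasurableSpace Ω]
    (P : Δ → Measure Ω) (hP : ∀ p, IsProbabilityMeasure (P p))
    (pchain : ℕ → Ω → Δ)  -- the Markov chain
    (H : ℕ → Set Ω) (hmono : Monotone H)
    (Hinf : Set Ω) (hHinf : Hinf = ⋃ t, H t)
    (hHmeas : ∀ t, MeasurableSet (H t))
    (K : Set Δ) (hKne : K.Nonempty)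
    (τ : ℕ → Ω → ℕ∞)
    (hτ : ∀ n₀ ω, τ n₀ ω =
      ⨅ (t : ℕ) (_ : n₀ ≤ t) (_ : pchain t ω ∈ K), (t : ℕ∞))
    (D : ℝ≥0∞) (hD : D = ⨅ (p : Δ) (_ : p ∈ K), P p Hinf)
    (hDpos : 0 < D)
    -- hypothesis (ii): for suitable n₀, the complement of H_{n₀} is the event
    -- of returning to K after n₀, and the strong Markov property gives
    -- ℙ(H_∞ | τ < ∞) ≥ D:
    (hii : ∀ p₀ ∈ K, ∀ n₀ : ℕ, D / 2 ≤ P p₀ (H n₀) →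
      (H n₀)ᶜ = {ω | τ n₀ ω < ⊤} ∧
      D * P p₀ {ω | τ n₀ ω < ⊤} ≤ P p₀ (Hinf ∩ {ω | τ n₀ ω < ⊤})) :
    D + D / 2 * (1 - D) ≤ D ∧ D = 1 :=
  stmt_16_general P hP H hmono Hinf hHinf hHmeas K hKne τ D hD hDpos hii
end
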